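/- Let P be a finite graded poset. Then I ∘ Gyr_A = Gyr_J ∘ I, where I : A(P) → J(P) is the bijection sending an antichain to the order ideal it generates. That is, for every antichain A ∈ A(P), the order ideal generated by Gyr_A(A) equals Gyr_J(I(A)). -/

import Mathlib

open scoped Classical

variable {P : Type*} [PartialOrder P]

abbrev OrderIdealSub (P : Type*) [PartialOrder P] : Type _ := {I : Set P // IsLowerSet I}

abbrev AntichainSub (P : Type*) [PartialOrder P] : Type _ := {A : Set P // IsAntichain (· ≤ ·) A}

noncomputable def togFun (e : P) (I : OrderIdealSub P) : OrderIdealSub P :=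
  if _h : e ∈ I.1 then
    if h2 : IsLowerSet (I.1 \ {e}) then ⟨I.1 \ {e}, h2⟩ else I
  else
    if h2 : IsLowerSet (insert e I.1) then ⟨insert e I.1, h2⟩ else I

noncomputable def atogFun (e : P) (A : AntichainSub P) : AntichainSub P :=
  if _h : e ∈ A.1 then ⟨A.1 \ {e}, A.2.subset Set.diff_subset⟩
  else if h2 : IsAntichain (· ≤ ·) (insert e A.1) then ⟨insert e A.1, h2⟩
  else A

def idealOf (A : AntichainSub P) : OrderIdealSub P :=
  ⟨{x | ∃ y ∈ A.1, x ≤ y}, fun _a _b hba ha => by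
    obtain ⟨y, hy, h⟩ := ha
    exact ⟨y, hy, hba.trans h⟩⟩

def listComp {α : Type*} (fs : List (α → α)) : α → α := fs.foldr (· ∘ ·) id

theorem togFun_involutive (e : P) : Function.Involutive (togFun (P := P) e) := by
  intro I
  unfold togFun
  by_cases h : e ∈ I.1
  · rw [dif_pos h]
    by_cases h2 : IsLowerSet (I.1 \ {e})
    · rw [dif_pos h2]
      have hne : e ∉ (⟨I.1 \ {e}, h2⟩ : OrderIdealSub P).1 := fun hc => hc.2 rfl
      rw [dif_neg hne]
      have hins : insert e (I.1 \ {e}) = I.1 := by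
        rw [Set.insert_diff_singleton, Set.insert_eq_self.mpr h]
      have h3 : IsLowerSet (insert e ((⟨I.1 \ {e}, h2⟩ : OrderIdealSub P)).1) := by
        show IsLowerSet (insert e (I.1 \ {e})); rw [hins]; exact I.2
      rw [dif_pos h3]
      exact Subtype.ext hins
    · rw [dif_neg h2, dif_pos h, dif_neg h2]
  · rw [dif_neg h]
    by_cases h2 : IsLowerSet (insert e I.1)
    · rw [dif_pos h2]
      have hme : e ∈ (⟨insert e I.1, h2⟩ : OrderIdealSub P).1 := Set.mem_insert e I.1
      rw [dif_pos hme]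
      have hdel : (insert e I.1) \ {e} = I.1 := by
        rw [Set.insert_sdiff_self_of_notMem h]
      have h3 : IsLowerSet ((⟨insert e I.1, h2⟩ : OrderIdealSub P).1 \ {e}) := by
        show IsLowerSet ((insert e I.1) \ {e}); rw [hdel]; exact I.2
      rw [dif_pos h3]
      exact Subtype.ext hdel
    · rw [dif_neg h2, dif_neg h, dif_neg h2]

theorem atogFun_involutive (e : P) : Function.Involutive (atogFun (P := P) e) := by
  intro A
  unfold atogFun
  by_cases h : e ∈ A.1
  · rw [dif_pos h]
    have hne : e ∉ (⟨A.1 \ {e}, A.2.subset Set.diff_subset⟩ : AntichainSub P).1 :=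
      fun hc => hc.2 rfl
    rw [dif_neg hne]
    have hins : insert e (A.1 \ {e}) = A.1 := by
      rw [Set.insert_diff_singleton, Set.insert_eq_self.mpr h]
    have h2 : IsAntichain (· ≤ ·)
        (insert e ((⟨A.1 \ {e}, A.2.subset Set.diff_subset⟩ : AntichainSub P)).1) := by
      show IsAntichain (· ≤ ·) (insert e (A.1 \ {e})); rw [hins]; exact A.2
    rw [dif_pos h2]
    exact Subtype.ext hins
  · rw [dif_neg h]
    by_cases h2 : IsAntichain (· ≤ ·) (insert e A.1)
    · rw [dif_pos h2]
      have hme : e ∈ (⟨insert e A.1, h2⟩ : AntichainSub P).1 := Set.mem_insert e A.1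
      rw [dif_pos hme]
      have hdel : (insert e A.1) \ {e} = A.1 := by
        rw [Set.insert_sdiff_self_of_notMem h]
      exact Subtype.ext hdel
    · rw [dif_neg h2, dif_neg h, dif_neg h2]

noncomputable def togPerm (e : P) : Equiv.Perm (OrderIdealSub P) :=
  (togFun_involutive e).toPerm _

noncomputable def atogPerm (e : P) : Equiv.Perm (AntichainSub P) :=
  (atogFun_involutive e).toPerm _

def IsLinExtListOn (S : Set P) (l : List P) : Prop :=
  l.Nodup ∧ (∀ x : P, x ∈ l ↔ x ∈ S) ∧
    ∀ i j : Fin l.length, l.get i < l.get j → (i : ℕ) < (j : ℕ)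

noncomputable def RowJ (I : OrderIdealSub P) : OrderIdealSub P :=
  ⟨{x | ∃ m, (m ∉ I.1 ∧ ∀ z, z ∉ I.1 → z ≤ m → z = m) ∧ x ≤ m}, fun _a _b hba ha => by
    obtain ⟨m, hm, h⟩ := ha
    exact ⟨m, hm, hba.trans h⟩⟩

noncomputable def RowA (A : AntichainSub P) : AntichainSub P :=
  ⟨{x | x ∉ (idealOf A).1 ∧ ∀ z, z ∉ (idealOf A).1 → z ≤ x → z = x}, by
    intro a ha b hb hne hab
    exact hne (hb.2 a ha.1 hab)⟩

/-!
Put `J = I(A)` and `Q = Gyr_J(J)`. Toggles at elements not related by a cover act independently,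
so membership in `Q` obeys local equations (`IsGyration`). From them, by well-founded induction,
a maximal element of `Q` of odd rank is exactly an element outside `J` lying above no even rank
element of `A` and no odd rank maximal element of `Q`; one of even rank is an element outside `A`,
below no maximal element of `Q`, with the same condition below it. These are precisely the
conditions under which the rank toggles of `Gyr_A`, odd ranks bottom up and then even ranks top
down, trade the rank `n` part of `A` for that of `max Q`. Hence `Gyr_A(A) = max Q`, which
generates `Q`.
-/

open Set

@[simp]
lemma listComp_nil {α : Type*} : listComp ([] : List (α → α)) = id := rfl

@[simp]
lemma listComp_singleton {α : Type*} (f : α → α) : listComp [f] = f := rfl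

lemma listComp_cons {α : Type*} (f : α → α) (fs : List (α → α)) :
    listComp (f :: fs) = f ∘ listComp fs := rfl

lemma listComp_append {α : Type*} (fs gs : List (α → α)) :
    listComp (fs ++ gs) = listComp fs ∘ listComp gs := by
  induction fs with
  | nil => rfl
  | cons f fs ih => rw [List.cons_append, listComp_cons, listComp_cons, ih]; rfl

lemma mem_idealOf (A : AntichainSub P) {a : P} (ha : a ∈ A.1) : a ∈ (idealOf A).1 :=
  ⟨a, ha, le_rfl⟩

lemma not_mem_idealOf_of_lt (A : AntichainSub P) {a c : P} (ha : a ∈ A.1) (hac : a < c) :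
    c ∉ (idealOf A).1 := fun ⟨_, hb, hcb⟩ =>
  A.2 ha hb (hac.trans_le hcb).ne (hac.le.trans hcb)

/-- Membership of `x` in the order ideal `K` after toggling `x`. -/
def MemToggle (K : Set P) (x : P) : Prop :=
  (x ∈ K ∧ ∃ c, x ⋖ c ∧ c ∈ K) ∨ (x ∉ K ∧ ∀ z, z ⋖ x → z ∈ K)

lemma memToggle_iff {K K' : Set P} {x : P} {p : Prop} (hx : x ∈ K ↔ p)
    (hup : ∀ c, x ⋖ c → (c ∈ K ↔ c ∈ K')) (hdown : ∀ z, z ⋖ x → (z ∈ K ↔ z ∈ K')) :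
    MemToggle K x ↔ (p ∧ ∃ c, x ⋖ c ∧ c ∈ K') ∨ (¬p ∧ ∀ z, z ⋖ x → z ∈ K') := by
  unfold MemToggle
  rw [hx]
  exact or_congr (and_congr_right' (exists_congr fun c => and_congr_right (hup c)))
    (and_congr_right' (forall_congr' fun z => imp_congr_right (hdown z)))

section Finite

variable [Finite P]

lemma IsLowerSet.exists_covBy_mem_iff {K : Set P} (hK : IsLowerSet K) {x : P} :
    (∃ c, x ⋖ c ∧ c ∈ K) ↔ ∃ c, x < c ∧ c ∈ K := by
  refine ⟨fun ⟨c, hc, hcK⟩ => ⟨c, hc.lt, hcK⟩, fun ⟨y, hy, hyK⟩ => ?_⟩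
  obtain ⟨c, hc, hcy⟩ := exists_covBy_le_of_lt hy
  exact ⟨c, hc, hK hcy hyK⟩

lemma IsLowerSet.forall_covBy_mem_iff {K : Set P} (hK : IsLowerSet K) {x : P} :
    (∀ z, z ⋖ x → z ∈ K) ↔ ∀ z, z < x → z ∈ K := by
  refine ⟨fun h z hz => ?_, fun h z hz => h z hz.lt⟩
  obtain ⟨c, hzc, hc⟩ := exists_le_covBy_of_lt hz
  exact hK hzc (h c hc)

lemma mem_togFun_self (e : P) (K : OrderIdealSub P) :
    e ∈ (togFun e K).1 ↔ MemToggle K.1 e := by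
  unfold togFun MemToggle
  rw [K.2.exists_covBy_mem_iff, K.2.forall_covBy_mem_iff]
  by_cases he : e ∈ K.1
  · have hdiff : IsLowerSet (K.1 \ {e}) ↔ ∀ c, e < c → c ∉ K.1 :=
      ⟨fun h c hc hcK => (h hc.le ⟨hcK, hc.ne'⟩).2 rfl,
        fun h => K.2.erase fun c hcK hec => by_contra fun hne => h c (hec.lt_of_ne' hne) hcK⟩
    by_cases h : IsLowerSet (K.1 \ {e}) <;> simp_all
  · have hins : IsLowerSet (insert e K.1) ↔ ∀ z, z < e → z ∈ K.1 := by
      refine ⟨fun h z hz => (h hz.le (mem_insert e K.1)).resolve_left hz.ne, fun h a b hba hb => ?_⟩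
      rcases hb with rfl | hb
      · rcases hba.eq_or_lt with rfl | hlt
        · exact mem_insert _ _
        · exact mem_insert_of_mem _ (h b hlt)
      · exact mem_insert_of_mem _ (K.2 hba hb)
    by_cases h : IsLowerSet (insert e K.1) <;> simp_all

end Finite

lemma mem_togFun_of_ne {e x : P} (K : OrderIdealSub P) (hx : x ≠ e) :
    x ∈ (togFun e K).1 ↔ x ∈ K.1 := by
  unfold togFun
  split_ifs <;> simp_all

lemma mem_atogFun_self (e : P) (B : AntichainSub P) :
    e ∈ (atogFun e B).1 ↔ e ∉ B.1 ∧ ∀ a ∈ B.1, a ≠ e → ¬a ≤ e ∧ ¬e ≤ a := by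
  have hins : IsAntichain (· ≤ ·) (insert e B.1) ↔ ∀ a ∈ B.1, a ≠ e → ¬a ≤ e ∧ ¬e ≤ a := by
    rw [isAntichain_insert]
    simp only [B.2, true_and, ne_comm (a := e), and_comm (a := ¬e ≤ _)]
  unfold atogFun
  by_cases he : e ∈ B.1
  · simp [he]
  · by_cases h : IsAntichain (· ≤ ·) (insert e B.1) <;> simp_all

lemma mem_atogFun_of_ne {e x : P} (B : AntichainSub P) (hx : x ≠ e) :
    x ∈ (atogFun e B).1 ↔ x ∈ B.1 := by
  unfold atogFun
  split_ifs <;> simp_all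

lemma mem_listComp_togFun [Finite P] {l : List P} (hl : l.Nodup)
    (hcov : ∀ x ∈ l, ∀ y ∈ l, ¬x ⋖ y) (K : OrderIdealSub P) (x : P) :
    x ∈ (listComp (l.map togFun) K).1 ↔ if x ∈ l then MemToggle K.1 x else x ∈ K.1 := by
  induction l generalizing x with
  | nil => rfl
  | cons e l ih =>
    obtain ⟨hel, hl⟩ := List.nodup_cons.mp hl
    have ih := ih hl fun x hx y hy => hcov x (.tail e hx) y (.tail e hy)
    have hout : ∀ y, y ∉ l → (y ∈ (listComp (l.map togFun) K).1 ↔ y ∈ K.1) := fun y hy => by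
      rw [ih, if_neg hy]
    rw [List.map_cons, listComp_cons, Function.comp_apply]
    by_cases hxe : x = e
    · subst hxe
      rw [mem_togFun_self, if_pos List.mem_cons_self]
      exact memToggle_iff (hout x hel)
        (fun c hc => hout c fun hcl => hcov x List.mem_cons_self c (.tail x hcl) hc)
        (fun z hz => hout z fun hzl => hcov z (.tail x hzl) x List.mem_cons_self hz)
    · rw [mem_togFun_of_ne _ hxe, ih]
      simp only [List.mem_cons, hxe, false_or]

lemma mem_listComp_atogFun {l : List P} (hl : l.Nodup) (hanti : IsAntichain (· ≤ ·) {x | x ∈ l})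
    (B : AntichainSub P) (x : P) :
    x ∈ (listComp (l.map atogFun) B).1 ↔
      if x ∈ l then x ∉ B.1 ∧ ∀ a ∈ B.1, a ≠ x → ¬a ≤ x ∧ ¬x ≤ a else x ∈ B.1 := by
  induction l generalizing x with
  | nil => rfl
  | cons e l ih =>
    obtain ⟨hel, hl⟩ := List.nodup_cons.mp hl
    have ih := ih hl (hanti.subset fun y hy => List.mem_cons_of_mem e hy)
    rw [List.map_cons, listComp_cons, Function.comp_apply]
    by_cases hxe : x = e
    · subst hxe
      rw [mem_atogFun_self, if_pos List.mem_cons_self, ih, if_neg hel]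
      refine and_congr_right fun _ => forall_congr' fun a => ?_
      by_cases hal : a ∈ l
      · have hax : a ≠ x := fun h => hel (h ▸ hal)
        have hinc : ¬a ≤ x ∧ ¬x ≤ a := ⟨hanti (.tail x hal) List.mem_cons_self hax,
          hanti List.mem_cons_self (.tail x hal) (Ne.symm hax)⟩
        simp only [hinc, not_false_eq_true, and_self, implies_true]
      · rw [ih, if_neg hal]
    · rw [mem_atogFun_of_ne _ hxe, ih]
      simp only [List.mem_cons, hxe, false_or]

lemma StrictMono.of_covBy_eq_succ [Finite P] {rk : P → ℕ}
    (hcov : ∀ x y : P, x ⋖ y → rk y = rk x + 1) : StrictMono rk := by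
  have := Fintype.ofFinite P
  have := Fintype.toLocallyFiniteOrder (α := P)
  exact (strictMono_iff_forall_covBy rk).2 fun a b h => by rw [hcov a b h]; omega

lemma le_of_forall_isMax_eq [Finite P] {rk : P → ℕ} (hmono : StrictMono rk) {r : ℕ}
    (hmax : ∀ x, IsMax x → rk x = r) (x : P) : rk x ≤ r := by
  obtain ⟨m, hxm, hm⟩ := Finite.exists_le_maximal (p := fun _ : P => True) (a := x) trivial
  rw [← hmax m fun y hy => hm.2 trivial hy]
  exact hmono.monotone hxm

lemma idealOf_eq_of_eq_maximal [Finite P] {K : OrderIdealSub P} {B : AntichainSub P}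
    (hB : B.1 = {m | Maximal (· ∈ K.1) m}) : idealOf B = K := by
  refine Subtype.ext (Set.ext fun x => ⟨fun ⟨m, hm, hxm⟩ => ?_, fun hx => ?_⟩)
  · rw [hB] at hm
    exact K.2 hxm hm.prop
  · obtain ⟨m, hxm, hm⟩ := Finite.exists_le_maximal hx
    exact ⟨m, hB ▸ hm, hxm⟩

lemma mem_ite_preimage {α β : Type*} {f : α → β} {D : Set β} {S T : Set α} {x : α} :
    x ∈ (f ⁻¹' D).ite S T ↔ if f x ∈ D then x ∈ S else x ∈ T := by
  by_cases h : f x ∈ D <;> simp [Set.ite, h]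

lemma listComp_atogFun_eq_ite {rk : P → ℕ} (hmono : StrictMono rk) {L : List P} {n : ℕ}
    (hL : L.Nodup ∧ ∀ x, x ∈ L ↔ rk x = n) {D : Set ℕ} (hn : n ∉ D) {S T : Set P}
    (hS : ∀ x, rk x = n →
      (x ∈ S ↔ x ∉ T ∧ ∀ a ∈ (rk ⁻¹' D).ite S T, rk a ≠ n → ¬a < x ∧ ¬x < a))
    (B : AntichainSub P) (hB : B.1 = (rk ⁻¹' D).ite S T) :
    (listComp (L.map atogFun) B).1 = (rk ⁻¹' insert n D).ite S T := by
  have hanti : IsAntichain (· ≤ ·) {x | x ∈ L} := fun a ha b hb hab hle =>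
    (hmono (hle.lt_of_ne hab)).ne (((hL.2 a).1 ha).trans ((hL.2 b).1 hb).symm)
  ext x
  rw [mem_listComp_atogFun hL.1 hanti, mem_ite_preimage, hB]
  by_cases hx : rk x = n
  · rw [if_pos ((hL.2 x).2 hx), if_pos (hx ▸ mem_insert n D), hS x hx, mem_ite_preimage,
      if_neg (hx ▸ hn)]
    refine and_congr_right fun _ => forall₂_congr fun a _ => ?_
    by_cases han : rk a = n
    · refine iff_of_true (fun hax => ⟨hanti ?_ ?_ hax, hanti ?_ ?_ hax.symm⟩) (absurd han) <;>
        simp [hL.2, han, hx]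
    · have hax : a ≠ x := fun h => han (h ▸ hx)
      rw [hax.le_iff_lt, hax.symm.le_iff_lt]
      exact ⟨fun h _ => h hax, fun h _ => h han⟩
  · rw [if_neg (mt (hL.2 x).1 hx), mem_ite_preimage, mem_insert_iff]
    simp only [hx, false_or]

section Gyration

variable {rk : P → ℕ} {A : AntichainSub P} {Q : Set P}

/-- `Q = Gyr_J J` in terms of membership: the odd toggles see the even ranks already toggled. -/
structure IsGyration (rk : P → ℕ) (J Q : Set P) : Prop where
  isLowerSet : IsLowerSet Q
  mem_even : ∀ y, rk y % 2 = 0 → (y ∈ Q ↔ MemToggle J y)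
  mem_odd : ∀ x, rk x % 2 = 1 →
    (x ∈ Q ↔ (x ∈ J ∧ ∃ c, x ⋖ c ∧ c ∈ Q) ∨ (x ∉ J ∧ ∀ z, z ⋖ x → z ∈ Q))

lemma isGyration_listComp_togFun [Finite P] (hcov : ∀ x y : P, x ⋖ y → rk y = rk x + 1)
    {lev lodd : List P}
    (hlev : lev.Nodup ∧ ∀ x, x ∈ lev ↔ rk x % 2 = 0)
    (hlodd : lodd.Nodup ∧ ∀ x, x ∈ lodd ↔ rk x % 2 = 1) (K : OrderIdealSub P) :
    IsGyration rk K.1 (listComp (lodd.map togFun) (listComp (lev.map togFun) K)).1 := by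
  have hsame {l : List P} {p : ℕ} (hl : ∀ x, x ∈ l ↔ rk x % 2 = p) :
      ∀ x ∈ l, ∀ y ∈ l, ¬x ⋖ y := fun x hx y hy hxy => by
    have := hcov x y hxy
    rw [hl] at hx hy
    omega
  set K₁ := listComp (lev.map togFun) K
  have h₁ (y : P) : y ∈ K₁.1 ↔ if rk y % 2 = 0 then MemToggle K.1 y else y ∈ K.1 := by
    rw [mem_listComp_togFun hlev.1 (hsame hlev.2) K y]
    simp only [hlev.2]
  have h₂ (y : P) : y ∈ (listComp (lodd.map togFun) K₁).1 ↔
      if rk y % 2 = 1 then MemToggle K₁.1 y else y ∈ K₁.1 := by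
    rw [mem_listComp_togFun hlodd.1 (hsame hlodd.2) K₁ y]
    simp only [hlodd.2]
  have hK₁ (y : P) (hy : rk y % 2 = 0) : y ∈ K₁.1 ↔ y ∈ (listComp (lodd.map togFun) K₁).1 := by
    rw [h₂, if_neg (by omega)]
  refine ⟨(listComp (lodd.map togFun) K₁).2, fun y hy => ?_, fun x hx => ?_⟩
  · rw [← hK₁ y hy, h₁, if_pos hy]
  · rw [h₂, if_pos hx]
    refine memToggle_iff (by rw [h₁, if_neg (by omega)]) (fun c hc => hK₁ c ?_)
      (fun z hz => hK₁ z ?_)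
    · have := hcov x c hc; omega
    · have := hcov z x hz; omega

def ClearBelow (rk : P → ℕ) (A : AntichainSub P) (Q : Set P) (x : P) : Prop :=
  (∀ a ∈ A.1, rk a % 2 = 0 → ¬a < x) ∧ (∀ m, Maximal (· ∈ Q) m → rk m % 2 = 1 → ¬m < x)

lemma ClearBelow.of_lt {x y : P} (h : ClearBelow rk A Q x) (hyx : y < x) : ClearBelow rk A Q y :=
  ⟨fun a ha hae hay => h.1 a ha hae (hay.trans hyx),
    fun m hm hmo hmy => h.2 m hm hmo (hmy.trans hyx)⟩

namespace IsGyration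

lemma not_mem_of_mem_antichain (hQ : IsGyration rk (idealOf A).1 Q) {a : P} (ha : a ∈ A.1)
    (hae : rk a % 2 = 0) : a ∉ Q := by
  rw [hQ.mem_even a hae]
  rintro (⟨-, c, hc, hcJ⟩ | ⟨haJ, -⟩)
  · exact not_mem_idealOf_of_lt A ha hc.lt hcJ
  · exact haJ (mem_idealOf A ha)

lemma clearBelow_of_mem (hQ : IsGyration rk (idealOf A).1 Q) {x : P} (hx : x ∈ Q) :
    ClearBelow rk A Q x :=
  ⟨fun _ ha hae hax => hQ.not_mem_of_mem_antichain ha hae (hQ.isLowerSet hax.le hx),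
    fun _ hm _ hmx => hm.not_gt hx hmx⟩

lemma mem_idealOf_of_covBy (hQ : IsGyration rk (idealOf A).1 Q) {x c : P} (hxc : x ⋖ c)
    (hc : rk c % 2 = 0) (hcQ : c ∈ Q) : x ∈ (idealOf A).1 := by
  rcases (hQ.mem_even c hc).1 hcQ with ⟨hcJ, -⟩ | ⟨-, h⟩
  · exact (idealOf A).2 hxc.le hcJ
  · exact h x hxc

lemma mem_of_even [Finite P] (hcov : ∀ x y : P, x ⋖ y → rk y = rk x + 1)
    (hQ : IsGyration rk (idealOf A).1 Q) {z : P} (hz : rk z % 2 = 0) (hzA : z ∉ A.1)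
    (hclear : ClearBelow rk A Q z)
    (hmax : ∀ w, w ⋖ z → rk w % 2 = 1 → w ∉ (idealOf A).1 → ClearBelow rk A Q w →
      Maximal (· ∈ Q) w) : z ∈ Q := by
  rw [hQ.mem_even z hz]
  by_cases hzJ : z ∈ (idealOf A).1
  · obtain ⟨b, hb, hzb⟩ := hzJ
    obtain ⟨c, hzc, hcb⟩ := exists_covBy_le_of_lt (hzb.lt_of_ne fun h => hzA (h ▸ hb))
    exact Or.inl ⟨⟨b, hb, hzb⟩, c, hzc, (idealOf A).2 hcb (mem_idealOf A hb)⟩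
  · refine Or.inr ⟨hzJ, fun w hw => by_contra fun hwJ => ?_⟩
    have hwo : rk w % 2 = 1 := by have := hcov w z hw; omega
    exact hclear.2 w (hmax w hw hwo hwJ (hclear.of_lt hw.lt)) hwo hw.lt

lemma maximal_iff_of_odd [Finite P] (hcov : ∀ x y : P, x ⋖ y → rk y = rk x + 1)
    (hQ : IsGyration rk (idealOf A).1 Q) (x : P) (hxo : rk x % 2 = 1) :
    Maximal (· ∈ Q) x ↔ x ∉ (idealOf A).1 ∧ ClearBelow rk A Q x := by
  induction x using WellFoundedLT.induction with
  | _ x ih =>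
  refine ⟨fun hx => ⟨fun hxJ => ?_, hQ.clearBelow_of_mem hx.prop⟩, fun ⟨hxJ, hclear⟩ => ?_⟩
  · rcases (hQ.mem_odd x hxo).1 hx.prop with ⟨-, c, hc, hcQ⟩ | ⟨hxJ', -⟩
    · exact hx.not_gt hcQ hc.lt
    · exact hxJ' hxJ
  have hcovQ (z : P) (hz : z ⋖ x) : z ∈ Q := by
    have hze : rk z % 2 = 0 := by have := hcov z x hz; omega
    exact hQ.mem_of_even hcov hze (fun hzA => hclear.1 z hzA hze hz.lt) (hclear.of_lt hz.lt)
      fun w hw hwo hwJ hwc => ((ih w (hw.lt.trans hz.lt) hwo).2 ⟨hwJ, hwc⟩)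
  refine maximal_iff_forall_gt.2 ⟨(hQ.mem_odd x hxo).2 (Or.inr ⟨hxJ, hcovQ⟩), fun y hxy hyQ => ?_⟩
  obtain ⟨c, hxc, hcy⟩ := exists_covBy_le_of_lt hxy
  have hce : rk c % 2 = 0 := by have := hcov x c hxc; omega
  exact hxJ (hQ.mem_idealOf_of_covBy hxc hce (hQ.isLowerSet hcy hyQ))

lemma maximal_iff_of_even [Finite P] (hcov : ∀ x y : P, x ⋖ y → rk y = rk x + 1)
    (hQ : IsGyration rk (idealOf A).1 Q) {x : P} (hxe : rk x % 2 = 0) :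
    Maximal (· ∈ Q) x ↔
      x ∉ A.1 ∧ (∀ m, Maximal (· ∈ Q) m → ¬x < m) ∧ ClearBelow rk A Q x := by
  refine ⟨fun hx => ⟨fun hxA => hQ.not_mem_of_mem_antichain hxA hxe hx.prop,
    fun m hm hxm => hx.not_gt hm.prop hxm, hQ.clearBelow_of_mem hx.prop⟩,
    fun ⟨hxA, habove, hclear⟩ => ?_⟩
  have hxQ := hQ.mem_of_even hcov hxe hxA hclear
    fun w _ hwo hwJ hwc => (hQ.maximal_iff_of_odd hcov w hwo).2 ⟨hwJ, hwc⟩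
  refine maximal_iff_forall_gt.2 ⟨hxQ, fun y hxy hyQ => ?_⟩
  obtain ⟨m, hym, hm⟩ := Finite.exists_le_maximal hyQ
  exact habove m hm (hxy.trans_le hym)

lemma maximal_iff_of_odd_phase [Finite P] (hcov : ∀ x y : P, x ⋖ y → rk y = rk x + 1)
    (hQ : IsGyration rk (idealOf A).1 Q) {n : ℕ} (hn : n % 2 = 1) {x : P} (hx : rk x = n) :
    Maximal (· ∈ Q) x ↔ x ∉ A.1 ∧ ∀ a ∈ (rk ⁻¹' {k | k % 2 = 1 ∧ k < n}).ite
      {m | Maximal (· ∈ Q) m} A.1, rk a ≠ n → ¬a < x ∧ ¬x < a := by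
  have hmono := StrictMono.of_covBy_eq_succ hcov
  rw [hQ.maximal_iff_of_odd hcov x (hx ▸ hn)]
  constructor
  · rintro ⟨hxJ, hclear⟩
    refine ⟨fun hxA => hxJ (mem_idealOf A hxA), fun a ha _ => ⟨fun hax => ?_, fun hxa => ?_⟩⟩
    · have := hmono hax
      rw [mem_ite_preimage] at ha
      split_ifs at ha with hD
      · exact hclear.2 a ha hD.1 hax
      · exact hclear.1 a ha (by simp only [mem_ofPred_eq] at hD; omega) hax
    · have := hmono hxa
      rw [mem_ite_preimage, if_neg (by simp only [mem_ofPred_eq]; omega)] at ha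
      exact hxJ ⟨a, ha, hxa.le⟩
  · rintro ⟨hxA, h⟩
    refine ⟨fun ⟨b, hb, hxb⟩ => ?_, fun a ha hae hax => ?_, fun m hm hmo hmx => ?_⟩
    · have hxb' : x < b := hxb.lt_of_ne fun h => hxA (h ▸ hb)
      have := hmono hxb'
      exact (h b (by rw [mem_ite_preimage, if_neg (by simp only [mem_ofPred_eq]; omega)]; exact hb) (by omega)).2 hxb'
    · have := hmono hax
      exact (h a (by rw [mem_ite_preimage, if_neg (by simp only [mem_ofPred_eq]; omega)]; exact ha) (by omega)).1 hax
    · have := hmono hmx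
      exact (h m (by rw [mem_ite_preimage, if_pos (by simp only [mem_ofPred_eq]; omega)]; exact hm) (by omega)).1 hmx

lemma maximal_iff_of_even_phase [Finite P] (hcov : ∀ x y : P, x ⋖ y → rk y = rk x + 1)
    (hQ : IsGyration rk (idealOf A).1 Q) {n : ℕ} (hn : n % 2 = 0) {x : P} (hx : rk x = n) :
    Maximal (· ∈ Q) x ↔ x ∉ A.1 ∧ ∀ a ∈ (rk ⁻¹' {k | k % 2 = 1 ∨ n + 1 ≤ k}).ite
      {m | Maximal (· ∈ Q) m} A.1, rk a ≠ n → ¬a < x ∧ ¬x < a := by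
  have hmono := StrictMono.of_covBy_eq_succ hcov
  rw [hQ.maximal_iff_of_even hcov (hx ▸ hn)]
  refine and_congr_right fun _ => ⟨fun ⟨habove, hclear⟩ a ha _ => ⟨fun hax => ?_, fun hxa => ?_⟩,
    fun h => ⟨fun m hm hxm => ?_, fun a ha hae hax => ?_, fun m hm hmo hmx => ?_⟩⟩
  · have := hmono hax
    rw [mem_ite_preimage] at ha
    split_ifs at ha with hD
    · exact hclear.2 a ha (by simp only [mem_ofPred_eq] at hD; omega) hax
    · exact hclear.1 a ha (by simp only [mem_ofPred_eq] at hD; omega) hax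
  · have := hmono hxa
    rw [mem_ite_preimage, if_pos (by simp only [mem_ofPred_eq]; omega)] at ha
    exact habove a ha hxa
  · have := hmono hxm
    exact (h m (by rw [mem_ite_preimage, if_pos (by simp only [mem_ofPred_eq]; omega)]; exact hm) (by omega)).2 hxm
  · have := hmono hax
    exact (h a (by rw [mem_ite_preimage, if_neg (by simp only [mem_ofPred_eq]; omega)]; exact ha) (by omega)).1 hax
  · have := hmono hmx
    exact (h m (by rw [mem_ite_preimage, if_pos (by simp only [mem_ofPred_eq]; omega)]; exact hm) (by omega)).1 hmx

lemma listComp_odd_ranks_atogFun [Finite P] (hcov : ∀ x y : P, x ⋖ y → rk y = rk x + 1)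
    (hQ : IsGyration rk (idealOf A).1 Q) {L : ℕ → List P}
    (hL : ∀ i, (L i).Nodup ∧ ∀ x, x ∈ L i ↔ rk x = i) (n : ℕ) :
    (listComp ((((List.range n).filter fun j => j % 2 = 1).reverse).map fun i =>
      listComp ((L i).map atogFun)) A).1 =
      (rk ⁻¹' {k | k % 2 = 1 ∧ k < n}).ite {m | Maximal (· ∈ Q) m} A.1 := by
  induction n with
  | zero => simp
  | succ n ih =>
    rw [List.range_succ, List.filter_append, List.reverse_append, List.map_append,
      listComp_append, Function.comp_apply]
    by_cases hn : n % 2 = 1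
    · simp only [List.filter_singleton, hn, decide_true, cond_true, List.reverse_singleton,
        List.map_singleton, listComp_singleton]
      rw [listComp_atogFun_eq_ite
        (StrictMono.of_covBy_eq_succ hcov) (hL n) (by simp)
        (fun x hx => hQ.maximal_iff_of_odd_phase hcov hn hx) _ ih]
      congr 2
      ext k
      simp only [mem_insert_iff, mem_ofPred_eq]
      omega
    · simp only [List.filter_singleton, hn, decide_false, cond_false, List.reverse_nil,
        List.map_nil, listComp_nil, id]
      rw [ih]
      congr 2
      ext k
      simp only [mem_ofPred_eq]
      omega

lemma listComp_even_ranks_atogFun [Finite P] (hcov : ∀ x y : P, x ⋖ y → rk y = rk x + 1)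
    (hQ : IsGyration rk (idealOf A).1 Q) {L : ℕ → List P}
    (hL : ∀ i, (L i).Nodup ∧ ∀ x, x ∈ L i ↔ rk x = i) (n : ℕ) (B : AntichainSub P)
    (hB : B.1 = (rk ⁻¹' {k | k % 2 = 1 ∨ n ≤ k}).ite {m | Maximal (· ∈ Q) m} A.1) :
    (listComp (((List.range n).filter fun j => j % 2 = 0).map fun i =>
      listComp ((L i).map atogFun)) B).1 = {m | Maximal (· ∈ Q) m} := by
  induction n generalizing B with
  | zero => simp [hB]
  | succ n ih =>
    rw [List.range_succ, List.filter_append, List.map_append, listComp_append,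
      Function.comp_apply]
    apply ih
    by_cases hn : n % 2 = 0
    · simp only [List.filter_singleton, hn, decide_true, cond_true, List.map_singleton,
        listComp_singleton]
      rw [listComp_atogFun_eq_ite
        (StrictMono.of_covBy_eq_succ hcov) (hL n) (by simp only [mem_ofPred_eq]; omega)
        (fun x hx => hQ.maximal_iff_of_even_phase hcov hn hx) B hB]
      congr 2
      ext k
      simp only [mem_insert_iff, mem_ofPred_eq]
      omega
    · simp only [List.filter_singleton, hn, decide_false, cond_false, List.map_nil,
        listComp_nil, id]
      rw [hB]
      congr 2
      ext k
      simp only [mem_ofPred_eq]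
      omega

end IsGyration

end Gyration

theorem gyration_commutes_with_ideal_generation_general
    (P : Type*) [PartialOrder P] [Fintype P] (rk : P → ℕ) (r : ℕ)
    (hrkcov : ∀ x y : P, x ⋖ y → rk y = rk x + 1)
    (hrkmax : ∀ x : P, IsMax x → rk x = r)
    (L : ℕ → List P) (hL : ∀ i, (L i).Nodup ∧ ∀ x : P, x ∈ L i ↔ rk x = i)
    (lev : List P) (hlev : lev.Nodup ∧ ∀ x : P, x ∈ lev ↔ rk x % 2 = 0)
    (lodd : List P) (hlodd : lodd.Nodup ∧ ∀ x : P, x ∈ lodd ↔ rk x % 2 = 1)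
    (A : AntichainSub P) :
    idealOf
        ((listComp (((List.range (r + 1)).filter fun j => j % 2 = 0).map fun i =>
            listComp ((L i).map atogFun)) ∘
          listComp ((((List.range (r + 1)).filter fun j => j % 2 = 1).reverse).map fun i =>
            listComp ((L i).map atogFun))) A)
      = (listComp (lodd.map togFun) ∘ listComp (lev.map togFun)) (idealOf A) := by
  have hrk := le_of_forall_isMax_eq (StrictMono.of_covBy_eq_succ hrkcov) hrkmax
  have hQ := isGyration_listComp_togFun hrkcov hlev hlodd (idealOf A)
  refine idealOf_eq_of_eq_maximal (hQ.listComp_even_ranks_atogFun hrkcov hL (r + 1) _ ?_)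
  rw [hQ.listComp_odd_ranks_atogFun hrkcov hL (r + 1)]
  congr 1
  ext x
  have := hrk x
  simp only [mem_preimage, mem_ofPred_eq]
  omega

/-- For a finite graded poset of rank `r`, the order ideal generated by `Gyr_A(A)` is
`Gyr_J` applied to the order ideal generated by `A`; i.e. `I ∘ Gyr_A = Gyr_J ∘ I`.
Here `Gyr_A` first applies the odd rank antichain toggles from the bottom rank up, then
the even rank antichain toggles from the top rank down, and `Gyr_J` applies the order
ideal toggles of all elements of even rank first (in any order `lev`), then those of all
elements of odd rank (in any order `lodd`). `L i` enumerates the elements of rank `i`. -/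
theorem gyration_commutes_with_ideal_generation
    (P : Type*) [PartialOrder P] [Fintype P] (rk : P → ℕ) (r : ℕ)
    (hrk0 : ∀ x : P, IsMin x → rk x = 0)
    (hrkcov : ∀ x y : P, x ⋖ y → rk y = rk x + 1)
    (hrkmax : ∀ x : P, IsMax x → rk x = r)
    (L : ℕ → List P) (hL : ∀ i, (L i).Nodup ∧ ∀ x : P, x ∈ L i ↔ rk x = i)
    (lev : List P) (hlev : lev.Nodup ∧ ∀ x : P, x ∈ lev ↔ rk x % 2 = 0)
    (lodd : List P) (hlodd : lodd.Nodup ∧ ∀ x : P, x ∈ lodd ↔ rk x % 2 = 1)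
    (A : AntichainSub P) :
    idealOf
        ((listComp (((List.range (r + 1)).filter fun j => j % 2 = 0).map fun i =>
            listComp ((L i).map atogFun)) ∘
          listComp ((((List.range (r + 1)).filter fun j => j % 2 = 1).reverse).map fun i =>
            listComp ((L i).map atogFun))) A)
      = (listComp (lodd.map togFun) ∘ listComp (lev.map togFun)) (idealOf A) :=
  gyration_commutes_with_ideal_generation_general P rk r hrkcov hrkmax L hL lev hlev lodd hlodd A
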